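/- arXiv:math/0107083 — 5 statements merged into one kernel-verified Lean document; each statement's English description precedes it below -/
import Mathlib

section
/- If f satisfies the third-order ODE f''' + 4μf' + 2μ'f = 0 where μ is differentiable, and (φ₀, φ₁) is a fundamental pair of solutions of φ'' + μφ = 0 with Wronskian 1, then f is a linear combination of φ₀², φ₀φ₁, and φ₁². Conversely, for any constants c₀, c₁, c₂, the function f = -c₀φ₀² - 2c₁φ₀φ₁ - c₂φ₁² satisfies f''' + 4μf' + 2μ'f = 0. -/
/-!
Products `y z` of solutions of `y'' + μ y = 0` solve Appell's equation
`f''' + 4 μ f' + 2 μ' f = 0`, by direct differentiation. Conversely, if `f` solves Appell's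
equation and `y, z` solve `y'' + μ y = 0`, then the bilinear concomitant
`B(y, z) = y' z' f - (y z' + y' z) f' / 2 + y z (f'' / 2 + μ f)` has zero derivative, and the
algebraic identity `W(y, z)² f = B(y, y) z² - 2 B(y, z) y z + B(z, z) y²`, with `W` the Wronskian,
writes `f` as a quadratic form in `φ₀, φ₁` with constant coefficients once `W(φ₀, φ₁) = 1`.
-/

open Set

def IsHillSolution (s : Set ℝ) (μ y y' : ℝ → ℝ) : Prop :=
  ∀ x ∈ s, HasDerivAt y (y' x) x ∧ HasDerivAt y' (-(μ x * y x)) x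

def IsAppellSolution (s : Set ℝ) (μ μ' f f' f'' f''' : ℝ → ℝ) : Prop :=
  ∀ x ∈ s, HasDerivAt f (f' x) x ∧ HasDerivAt f' (f'' x) x ∧ HasDerivAt f'' (f''' x) x ∧
    f''' x + 4 * μ x * f' x + 2 * μ' x * f x = 0

noncomputable def appellConcomitant (μ y y' z z' f f' f'' : ℝ → ℝ) (x : ℝ) : ℝ :=
  y' x * z' x * f x - (y x * z' x + y' x * z x) / 2 * f' x
    + y x * z x * (f'' x / 2 + μ x * f x)

section

variable {s : Set ℝ} {μ μ' y y' z z' f f' f'' f''' g g' g'' g''' : ℝ → ℝ}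

lemma IsHillSolution.of_hasDerivAt {y'' : ℝ → ℝ} (hy : ∀ x ∈ s, HasDerivAt y (y' x) x)
    (hy' : ∀ x ∈ s, HasDerivAt y' (y'' x) x) (hode : ∀ x ∈ s, y'' x + μ x * y x = 0) :
    IsHillSolution s μ y y' :=
  fun x hx => ⟨hy x hx, (hy' x hx).congr_deriv (by linarith [hode x hx])⟩

lemma IsAppellSolution.add (hf : IsAppellSolution s μ μ' f f' f'' f''')
    (hg : IsAppellSolution s μ μ' g g' g'' g''') :
    IsAppellSolution s μ μ' (fun x => f x + g x) (fun x => f' x + g' x)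
      (fun x => f'' x + g'' x) (fun x => f''' x + g''' x) := by
  intro x hx
  obtain ⟨hf₁, hf₂, hf₃, hfe⟩ := hf x hx
  obtain ⟨hg₁, hg₂, hg₃, hge⟩ := hg x hx
  exact ⟨hf₁.add hg₁, hf₂.add hg₂, hf₃.add hg₃, by linear_combination hfe + hge⟩

lemma IsAppellSolution.const_mul (c : ℝ) (hf : IsAppellSolution s μ μ' f f' f'' f''') :
    IsAppellSolution s μ μ' (fun x => c * f x) (fun x => c * f' x)
      (fun x => c * f'' x) (fun x => c * f''' x) := by
  intro x hx
  obtain ⟨hf₁, hf₂, hf₃, hfe⟩ := hf x hx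
  exact ⟨hf₁.const_mul c, hf₂.const_mul c, hf₃.const_mul c, by linear_combination c * hfe⟩

lemma IsAppellSolution.deriv_eq_zero (hs : IsOpen s) (hf : IsAppellSolution s μ μ' f f' f'' f''')
    {x : ℝ} (hx : x ∈ s) :
    deriv (deriv (deriv f)) x + 4 * μ x * deriv f x + 2 * μ' x * f x = 0 := by
  have e₁ : EqOn (deriv f) f' s := fun x hx => (hf x hx).1.deriv
  have e₂ : EqOn (deriv (deriv f)) f'' s := (e₁.deriv hs).trans fun x hx => (hf x hx).2.1.deriv
  have e₃ : EqOn (deriv (deriv (deriv f))) f''' s :=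
    (e₂.deriv hs).trans fun x hx => (hf x hx).2.2.1.deriv
  rw [e₃ hx, e₁ hx]
  exact (hf x hx).2.2.2

lemma IsHillSolution.isAppellSolution_mul (hμ : ∀ x ∈ s, HasDerivAt μ (μ' x) x)
    (hy : IsHillSolution s μ y y') (hz : IsHillSolution s μ z z') :
    IsAppellSolution s μ μ' (fun x => y x * z x) (fun x => y' x * z x + y x * z' x)
      (fun x => 2 * (y' x * z' x) - 2 * (μ x * (y x * z x)))
      (fun x => -(4 * (μ x * (y' x * z x + y x * z' x))) - 2 * (μ' x * (y x * z x))) := by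
  intro x hx
  obtain ⟨hy₁, hy₂⟩ := hy x hx
  obtain ⟨hz₁, hz₂⟩ := hz x hx
  refine ⟨hy₁.mul hz₁, ((hy₂.mul hz₁).add (hy₁.mul hz₂)).congr_deriv (by ring),
    (((hy₂.mul hz₂).const_mul 2).sub
      (((hμ x hx).mul (hy₁.mul hz₁)).const_mul 2)).congr_deriv (by simp only [Pi.mul_apply]; ring),
    by ring⟩

lemma IsAppellSolution.hasDerivAt_appellConcomitant (hμ : ∀ x ∈ s, HasDerivAt μ (μ' x) x)
    (hf : IsAppellSolution s μ μ' f f' f'' f''') (hy : IsHillSolution s μ y y')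
    (hz : IsHillSolution s μ z z') {x : ℝ} (hx : x ∈ s) :
    HasDerivAt (appellConcomitant μ y y' z z' f f' f'') 0 x := by
  obtain ⟨hf₁, hf₂, hf₃, hfe⟩ := hf x hx
  obtain ⟨hy₁, hy₂⟩ := hy x hx
  obtain ⟨hz₁, hz₂⟩ := hz x hx
  exact ((((hy₂.mul hz₂).mul hf₁).sub
    ((((hy₁.mul hz₂).add (hy₂.mul hz₁)).div_const 2).mul hf₂)).add
    ((hy₁.mul hz₁).mul ((hf₃.div_const 2).add ((hμ x hx).mul hf₁)))).congr_deriv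
    (by
      simp only [Pi.mul_apply, Pi.add_apply]
      linear_combination y x * z x / 2 * hfe)

lemma IsAppellSolution.exists_appellConcomitant_eq_const (hs : IsOpen s) (hs' : IsPreconnected s)
    (hμ : ∀ x ∈ s, HasDerivAt μ (μ' x) x) (hf : IsAppellSolution s μ μ' f f' f'' f''')
    (hy : IsHillSolution s μ y y') (hz : IsHillSolution s μ z z') :
    ∃ c, ∀ x ∈ s, appellConcomitant μ y y' z z' f f' f'' x = c :=
  hs.exists_is_const_of_deriv_eq_zero hs'
    (fun _ hx => (hf.hasDerivAt_appellConcomitant hμ hy hz hx).differentiableAt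
      |>.differentiableWithinAt)
    (fun _ hx => (hf.hasDerivAt_appellConcomitant hμ hy hz hx).deriv)

lemma sq_wronskian_mul_eq_appellConcomitant (μ y y' z z' f f' f'' : ℝ → ℝ) (x : ℝ) :
    (y x * z' x - z x * y' x) ^ 2 * f x =
      appellConcomitant μ y y' y y' f f' f'' x * z x ^ 2
        - 2 * appellConcomitant μ y y' z z' f f' f'' x * y x * z x
        + appellConcomitant μ z z' z z' f f' f'' x * y x ^ 2 := by
  unfold appellConcomitant
  ring

end

theorem stmt_7_general (I : Set ℝ) (hIopen : IsOpen I) (hIconv : Convex ℝ I)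
    (μ μ' φ₀ φ₁ φ₀' φ₁' φ₀'' φ₁'' : ℝ → ℝ)
    (hμ : ∀ x ∈ I, HasDerivAt μ (μ' x) x)
    (h0 : ∀ x ∈ I, HasDerivAt φ₀ (φ₀' x) x)
    (h0' : ∀ x ∈ I, HasDerivAt φ₀' (φ₀'' x) x)
    (h1 : ∀ x ∈ I, HasDerivAt φ₁ (φ₁' x) x)
    (h1' : ∀ x ∈ I, HasDerivAt φ₁' (φ₁'' x) x)
    (hode0 : ∀ x ∈ I, φ₀'' x + μ x * φ₀ x = 0)
    (hode1 : ∀ x ∈ I, φ₁'' x + μ x * φ₁ x = 0)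
    (hW : ∀ x ∈ I, φ₀ x * φ₁' x - φ₁ x * φ₀' x = 1)
    (f f' f'' f''' : ℝ → ℝ)
    (hf : ∀ x ∈ I, HasDerivAt f (f' x) x)
    (hf' : ∀ x ∈ I, HasDerivAt f' (f'' x) x)
    (hf'' : ∀ x ∈ I, HasDerivAt f'' (f''' x) x) :
    ((∀ x ∈ I, f''' x + 4 * μ x * f' x + 2 * μ' x * f x = 0) →
      ∃ c₀ c₁ c₂ : ℝ, ∀ x ∈ I,
        f x = -c₀ * φ₀ x ^ 2 - 2 * c₁ * φ₀ x * φ₁ x - c₂ * φ₁ x ^ 2) ∧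
    (∀ c₀ c₁ c₂ : ℝ, ∀ x ∈ I,
      deriv (deriv (deriv (fun t => -c₀ * φ₀ t ^ 2 - 2 * c₁ * φ₀ t * φ₁ t - c₂ * φ₁ t ^ 2))) x
        + 4 * μ x * deriv (fun t => -c₀ * φ₀ t ^ 2 - 2 * c₁ * φ₀ t * φ₁ t - c₂ * φ₁ t ^ 2) x
        + 2 * μ' x * (-c₀ * φ₀ x ^ 2 - 2 * c₁ * φ₀ x * φ₁ x - c₂ * φ₁ x ^ 2) = 0) := by
  have hφ₀ := IsHillSolution.of_hasDerivAt h0 h0' hode0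
  have hφ₁ := IsHillSolution.of_hasDerivAt h1 h1' hode1
  refine ⟨fun hode => ?_, fun c₀ c₁ c₂ x hx => ?_⟩
  · have happ : IsAppellSolution I μ μ' f f' f'' f''' :=
      fun x hx => ⟨hf x hx, hf' x hx, hf'' x hx, hode x hx⟩
    have hI := hIconv.isPreconnected
    obtain ⟨b₀₀, hb₀₀⟩ := happ.exists_appellConcomitant_eq_const hIopen hI hμ hφ₀ hφ₀
    obtain ⟨b₀₁, hb₀₁⟩ := happ.exists_appellConcomitant_eq_const hIopen hI hμ hφ₀ hφ₁
    obtain ⟨b₁₁, hb₁₁⟩ := happ.exists_appellConcomitant_eq_const hIopen hI hμ hφ₁ hφ₁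
    refine ⟨-b₁₁, b₀₁, -b₀₀, fun x hx => ?_⟩
    have key := sq_wronskian_mul_eq_appellConcomitant μ φ₀ φ₀' φ₁ φ₁' f f' f'' x
    rw [hW x hx, hb₀₀ x hx, hb₀₁ x hx, hb₁₁ x hx] at key
    linear_combination key
  · have happ := ((hφ₀.isAppellSolution_mul hμ hφ₀).const_mul (-c₀)).add
      (((hφ₀.isAppellSolution_mul hμ hφ₁).const_mul (-2 * c₁)).add
        ((hφ₁.isAppellSolution_mul hμ hφ₁).const_mul (-c₂)))
    have hfun : (fun t => -c₀ * φ₀ t ^ 2 - 2 * c₁ * φ₀ t * φ₁ t - c₂ * φ₁ t ^ 2) =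
        fun t => -c₀ * (φ₀ t * φ₀ t) + (-2 * c₁ * (φ₀ t * φ₁ t) + -c₂ * (φ₁ t * φ₁ t)) := by
      funext t; ring
    rw [hfun]
    linear_combination happ.deriv_eq_zero hIopen hx

/-- If `f''' + 4μf' + 2μ'f = 0` and `(φ₀, φ₁)` is a normalized pair of solutions
of `φ'' + μφ = 0` (Wronskian 1), then `f = -c₀φ₀² - 2c₁φ₀φ₁ - c₂φ₁²` for some
constants; conversely every such combination satisfies the third-order ODE. -/
theorem stmt_7 (I : Set ℝ) (hIopen : IsOpen I) (hIconv : Convex ℝ I) (hIne : I.Nonempty)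
    (μ μ' φ₀ φ₁ φ₀' φ₁' φ₀'' φ₁'' : ℝ → ℝ)
    (hμ : ∀ x ∈ I, HasDerivAt μ (μ' x) x) (hμ' : ContinuousOn μ' I)
    (h0 : ∀ x ∈ I, HasDerivAt φ₀ (φ₀' x) x)
    (h0' : ∀ x ∈ I, HasDerivAt φ₀' (φ₀'' x) x)
    (h1 : ∀ x ∈ I, HasDerivAt φ₁ (φ₁' x) x)
    (h1' : ∀ x ∈ I, HasDerivAt φ₁' (φ₁'' x) x)
    (hode0 : ∀ x ∈ I, φ₀'' x + μ x * φ₀ x = 0)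
    (hode1 : ∀ x ∈ I, φ₁'' x + μ x * φ₁ x = 0)
    (hW : ∀ x ∈ I, φ₀ x * φ₁' x - φ₁ x * φ₀' x = 1)
    (f f' f'' f''' : ℝ → ℝ)
    (hf : ∀ x ∈ I, HasDerivAt f (f' x) x)
    (hf' : ∀ x ∈ I, HasDerivAt f' (f'' x) x)
    (hf'' : ∀ x ∈ I, HasDerivAt f'' (f''' x) x) :
    ((∀ x ∈ I, f''' x + 4 * μ x * f' x + 2 * μ' x * f x = 0) →
      ∃ c₀ c₁ c₂ : ℝ, ∀ x ∈ I,
        f x = -c₀ * φ₀ x ^ 2 - 2 * c₁ * φ₀ x * φ₁ x - c₂ * φ₁ x ^ 2) ∧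
    (∀ c₀ c₁ c₂ : ℝ, ∀ x ∈ I,
      deriv (deriv (deriv (fun t => -c₀ * φ₀ t ^ 2 - 2 * c₁ * φ₀ t * φ₁ t - c₂ * φ₁ t ^ 2))) x
        + 4 * μ x * deriv (fun t => -c₀ * φ₀ t ^ 2 - 2 * c₁ * φ₀ t * φ₁ t - c₂ * φ₁ t ^ 2) x
        + 2 * μ' x * (-c₀ * φ₀ x ^ 2 - 2 * c₁ * φ₀ x * φ₁ x - c₂ * φ₁ x ^ 2) = 0) :=
  stmt_7_general I hIopen hIconv μ μ' φ₀ φ₁ φ₀' φ₁' φ₀'' φ₁'' hμ h0 h0' h1 h1' hode0 hode1 hW f f'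
    f'' f''' hf hf' hf''
end

section
/- With e₃ = (u,v,w) as in the classical formula on the rectangle λ₁ < Y < λ₂ < X < λ₃, one has ∂e₃/∂X · ∂e₃/∂Y = 0 (the X- and Y-partial derivatives are orthogonal in ℝ³), and ∂e₃/∂X · ∂e₃/∂X = -(X-Y)/(4(X-λ₁)(X-λ₂)(X-λ₃)) and ∂e₃/∂Y · ∂e₃/∂Y = (X-Y)/(4(Y-λ₁)(Y-λ₂)(Y-λ₃)). -/
set_option maxHeartbeats 1000000

lemma sqrt_deriv_aux {f : ℝ → ℝ} {f' x : ℝ} (hf : HasDerivAt f f' x) (h : 0 < f x) :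
    deriv (fun t => Real.sqrt (f t)) x = f' / (2 * Real.sqrt (f x)) :=
  (hf.sqrt h.ne').deriv

lemma sq_aux (c q : ℝ) (hq : 0 ≤ q) : (c / (2 * Real.sqrt q)) ^ 2 = c ^ 2 / (4 * q) := by
  rw [div_pow, mul_pow, Real.sq_sqrt hq]
  norm_num

lemma pr_aux (c1 c2 q : ℝ) (hq : 0 ≤ q) :
    c1 / (2 * Real.sqrt q) * (c2 / (2 * Real.sqrt q)) = c1 * c2 / (4 * q) := by
  rw [div_mul_div_comm, mul_mul_mul_comm, Real.mul_self_sqrt hq]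
  norm_num

/-- With `e₃ = (u,v,w)` the classical map on the rectangle `λ₁ < Y < λ₂ < X < λ₃`,
the `X`- and `Y`-partials of `e₃` are orthogonal, and their squared lengths are
`-(X-Y)/(4(X-λ₁)(X-λ₂)(X-λ₃))` and `(X-Y)/(4(Y-λ₁)(Y-λ₂)(Y-λ₃))` respectively. -/
theorem stmt_13 (l1 l2 l3 : ℝ) (h12 : l1 < l2) (h23 : l2 < l3)
    (u v w : ℝ → ℝ → ℝ)
    (hu : ∀ X Y, u X Y = Real.sqrt ((X - l1) * (Y - l1) / ((l2 - l1) * (l3 - l1))))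
    (hv : ∀ X Y, v X Y = Real.sqrt ((X - l2) * (l2 - Y) / ((l2 - l1) * (l3 - l2))))
    (hw : ∀ X Y, w X Y = Real.sqrt ((l3 - X) * (l3 - Y) / ((l3 - l1) * (l3 - l2))))
    (X Y : ℝ) (hY1 : l1 < Y) (hY2 : Y < l2) (hX1 : l2 < X) (hX2 : X < l3) :
    (deriv (fun X' => u X' Y) X * deriv (fun Y' => u X Y') Y
      + deriv (fun X' => v X' Y) X * deriv (fun Y' => v X Y') Y
      + deriv (fun X' => w X' Y) X * deriv (fun Y' => w X Y') Y = 0) ∧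
    ((deriv (fun X' => u X' Y) X) ^ 2 + (deriv (fun X' => v X' Y) X) ^ 2
      + (deriv (fun X' => w X' Y) X) ^ 2
      = -(X - Y) / (4 * (X - l1) * (X - l2) * (X - l3))) ∧
    ((deriv (fun Y' => u X Y') Y) ^ 2 + (deriv (fun Y' => v X Y') Y) ^ 2
      + (deriv (fun Y' => w X Y') Y) ^ 2
      = (X - Y) / (4 * (Y - l1) * (Y - l2) * (Y - l3))) := by
  have p1 : (0:ℝ) < X - l1 := by linarith
  have p2 : (0:ℝ) < X - l2 := by linarith
  have p3 : (0:ℝ) < l3 - X := by linarith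
  have p4 : (0:ℝ) < Y - l1 := by linarith
  have p5 : (0:ℝ) < l2 - Y := by linarith
  have p6 : (0:ℝ) < l3 - Y := by linarith
  have d21 : (0:ℝ) < l2 - l1 := by linarith
  have d31 : (0:ℝ) < l3 - l1 := by linarith
  have d32 : (0:ℝ) < l3 - l2 := by linarith
  have qu : (0:ℝ) < (X - l1) * (Y - l1) / ((l2 - l1) * (l3 - l1)) :=
    div_pos (mul_pos p1 p4) (mul_pos d21 d31)
  have qv : (0:ℝ) < (X - l2) * (l2 - Y) / ((l2 - l1) * (l3 - l2)) :=
    div_pos (mul_pos p2 p5) (mul_pos d21 d32)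
  have qw : (0:ℝ) < (l3 - X) * (l3 - Y) / ((l3 - l1) * (l3 - l2)) :=
    div_pos (mul_pos p3 p6) (mul_pos d31 d32)
  simp only [hu, hv, hw]
  have duX : deriv (fun X' => Real.sqrt ((X' - l1) * (Y - l1) / ((l2 - l1) * (l3 - l1)))) X
      = (1 * (Y - l1) / ((l2 - l1) * (l3 - l1)))
        / (2 * Real.sqrt ((X - l1) * (Y - l1) / ((l2 - l1) * (l3 - l1)))) :=
    sqrt_deriv_aux ((((hasDerivAt_id X).sub_const l1).mul_const (Y - l1)).div_const _) qu
  have dvX : deriv (fun X' => Real.sqrt ((X' - l2) * (l2 - Y) / ((l2 - l1) * (l3 - l2)))) X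
      = (1 * (l2 - Y) / ((l2 - l1) * (l3 - l2)))
        / (2 * Real.sqrt ((X - l2) * (l2 - Y) / ((l2 - l1) * (l3 - l2)))) :=
    sqrt_deriv_aux ((((hasDerivAt_id X).sub_const l2).mul_const (l2 - Y)).div_const _) qv
  have dwX : deriv (fun X' => Real.sqrt ((l3 - X') * (l3 - Y) / ((l3 - l1) * (l3 - l2)))) X
      = ((0 - 1) * (l3 - Y) / ((l3 - l1) * (l3 - l2)))
        / (2 * Real.sqrt ((l3 - X) * (l3 - Y) / ((l3 - l1) * (l3 - l2)))) :=
    sqrt_deriv_aux (((((hasDerivAt_const X l3).sub (hasDerivAt_id X))).mul_const (l3 - Y)).div_const _) qw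
  have duY : deriv (fun Y' => Real.sqrt ((X - l1) * (Y' - l1) / ((l2 - l1) * (l3 - l1)))) Y
      = ((X - l1) * 1 / ((l2 - l1) * (l3 - l1)))
        / (2 * Real.sqrt ((X - l1) * (Y - l1) / ((l2 - l1) * (l3 - l1)))) :=
    sqrt_deriv_aux ((((hasDerivAt_id Y).sub_const l1).const_mul (X - l1)).div_const _) qu
  have dvY : deriv (fun Y' => Real.sqrt ((X - l2) * (l2 - Y') / ((l2 - l1) * (l3 - l2)))) Y
      = ((X - l2) * (0 - 1) / ((l2 - l1) * (l3 - l2)))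
        / (2 * Real.sqrt ((X - l2) * (l2 - Y) / ((l2 - l1) * (l3 - l2)))) :=
    sqrt_deriv_aux ((((hasDerivAt_const Y l2).sub (hasDerivAt_id Y)).const_mul (X - l2)).div_const _) qv
  have dwY : deriv (fun Y' => Real.sqrt ((l3 - X) * (l3 - Y') / ((l3 - l1) * (l3 - l2)))) Y
      = ((l3 - X) * (0 - 1) / ((l3 - l1) * (l3 - l2)))
        / (2 * Real.sqrt ((l3 - X) * (l3 - Y) / ((l3 - l1) * (l3 - l2)))) :=
    sqrt_deriv_aux ((((hasDerivAt_const Y l3).sub (hasDerivAt_id Y)).const_mul (l3 - X)).div_const _) qw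
  rw [duX, dvX, dwX, duY, dvY, dwY]
  rw [pr_aux _ _ _ qu.le, pr_aux _ _ _ qv.le, pr_aux _ _ _ qw.le,
      sq_aux _ _ qu.le, sq_aux _ _ qv.le, sq_aux _ _ qw.le,
      sq_aux _ _ qu.le, sq_aux _ _ qv.le, sq_aux _ _ qw.le]
  have n1 := p1.ne'
  have n2 := p2.ne'
  have n3 : X - l3 ≠ 0 := by linarith
  have n4 := p4.ne'
  have n5 : Y - l2 ≠ 0 := by linarith
  have n6 : Y - l3 ≠ 0 := by linarith
  have n7 := p3.ne'
  have n8 := p5.ne'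
  have n9 := p6.ne'
  have m1 := d21.ne'
  have m2 := d31.ne'
  have m3 := d32.ne'
  refine ⟨?_, ?_, ?_⟩
  · have t1 : 1 * (Y - l1) / ((l2 - l1) * (l3 - l1)) * ((X - l1) * 1 / ((l2 - l1) * (l3 - l1)))
        / (4 * ((X - l1) * (Y - l1) / ((l2 - l1) * (l3 - l1))))
        = 1 / (4 * ((l2 - l1) * (l3 - l1))) := by field_simp
    have t2 : 1 * (l2 - Y) / ((l2 - l1) * (l3 - l2)) * ((X - l2) * (0 - 1) / ((l2 - l1) * (l3 - l2)))
        / (4 * ((X - l2) * (l2 - Y) / ((l2 - l1) * (l3 - l2))))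
        = -(1 / (4 * ((l2 - l1) * (l3 - l2)))) := by field_simp; ring
    have t3 : (0 - 1) * (l3 - Y) / ((l3 - l1) * (l3 - l2)) * ((l3 - X) * (0 - 1) / ((l3 - l1) * (l3 - l2)))
        / (4 * ((l3 - X) * (l3 - Y) / ((l3 - l1) * (l3 - l2))))
        = 1 / (4 * ((l3 - l1) * (l3 - l2))) := by field_simp; ring
    rw [t1, t2, t3]
    field_simp
    ring
  · have t1 : (1 * (Y - l1) / ((l2 - l1) * (l3 - l1))) ^ 2
        / (4 * ((X - l1) * (Y - l1) / ((l2 - l1) * (l3 - l1))))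
        = (Y - l1) / (4 * ((X - l1) * ((l2 - l1) * (l3 - l1)))) := by field_simp
    have t2 : (1 * (l2 - Y) / ((l2 - l1) * (l3 - l2))) ^ 2
        / (4 * ((X - l2) * (l2 - Y) / ((l2 - l1) * (l3 - l2))))
        = (l2 - Y) / (4 * ((X - l2) * ((l2 - l1) * (l3 - l2)))) := by field_simp
    have t3 : ((0 - 1) * (l3 - Y) / ((l3 - l1) * (l3 - l2))) ^ 2
        / (4 * ((l3 - X) * (l3 - Y) / ((l3 - l1) * (l3 - l2))))
        = (l3 - Y) / (4 * ((l3 - X) * ((l3 - l1) * (l3 - l2)))) := by field_simp; ring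
    rw [t1, t2, t3]
    field_simp
    ring
  · have t1 : ((X - l1) * 1 / ((l2 - l1) * (l3 - l1))) ^ 2
        / (4 * ((X - l1) * (Y - l1) / ((l2 - l1) * (l3 - l1))))
        = (X - l1) / (4 * ((Y - l1) * ((l2 - l1) * (l3 - l1)))) := by field_simp
    have t2 : ((X - l2) * (0 - 1) / ((l2 - l1) * (l3 - l2))) ^ 2
        / (4 * ((X - l2) * (l2 - Y) / ((l2 - l1) * (l3 - l2))))
        = (X - l2) / (4 * ((l2 - Y) * ((l2 - l1) * (l3 - l2)))) := by field_simp; ring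
    have t3 : ((l3 - X) * (0 - 1) / ((l3 - l1) * (l3 - l2))) ^ 2
        / (4 * ((l3 - X) * (l3 - Y) / ((l3 - l1) * (l3 - l2))))
        = (l3 - X) / (4 * ((l3 - Y) * ((l3 - l1) * (l3 - l2)))) := by field_simp; ring
    rw [t1, t2, t3]
    field_simp
    ring
end

section
/- With e₃ as in the classical formula on the rectangle λ₁ < Y < λ₂ < X < λ₃, each component of e₃ satisfies the Euler equation ∂²e₃/∂X∂Y + (1/2)/(X-Y)·∂e₃/∂X - (1/2)/(X-Y)·∂e₃/∂Y = 0. -/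
/-!
Each component is `√(f X · g Y)` with `f`, `g` affine and vanishing at the same `λᵢ`:
`u`, `v`, `w` at `λ₁`, `λ₂`, `λ₃`. The variables separate, so
`e_X = f' √g / (2√f)`, `e_Y = g' √f / (2√g)` and `e_XY = f' g' / (4 √f √g)`; after multiplying
by `4 √f √g (X - Y) / (f' g')` the equation becomes `(X - Y) + (Y - λᵢ) - (X - λᵢ) = 0`.
-/

open Real Topology

noncomputable def eulerPoissonDarboux (e : ℝ → ℝ → ℝ) (X Y : ℝ) : ℝ :=
  deriv (fun Y' => deriv (fun X' => e X' Y') X) Y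
    + ((1 : ℝ)/2) / (X - Y) * deriv (fun X' => e X' Y) X
    - ((1 : ℝ)/2) / (X - Y) * deriv (fun Y' => e X Y') Y

section SqrtMul

variable {f g : ℝ → ℝ} {f' g' x y : ℝ}

theorem deriv_sqrt_mul_const (hf : HasDerivAt f f' x) (hfx : 0 < f x) {c : ℝ} (hc : 0 ≤ c) :
    deriv (fun x' => √(f x' * c)) x = f' / (2 * √(f x)) * √c := by
  simp_rw [Real.sqrt_mul' _ hc]
  exact ((hf.sqrt hfx.ne').mul_const _).deriv

theorem deriv_sqrt_const_mul (hg : HasDerivAt g g' y) (hgy : 0 < g y) {c : ℝ} (hc : 0 ≤ c) :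
    deriv (fun y' => √(c * g y')) y = √c * (g' / (2 * √(g y))) := by
  simp_rw [Real.sqrt_mul hc]
  exact ((hg.sqrt hgy.ne').const_mul _).deriv

theorem deriv_deriv_sqrt_mul (hf : HasDerivAt f f' x) (hfx : 0 < f x)
    (hg : HasDerivAt g g' y) (hgy : 0 < g y) :
    deriv (fun y' => deriv (fun x' => √(f x' * g y')) x) y
      = f' / (2 * √(f x)) * (g' / (2 * √(g y))) := by
  have hpartial : (fun y' => deriv (fun x' => √(f x' * g y')) x)
      =ᶠ[𝓝 y] fun y' => f' / (2 * √(f x)) * √(g y') := by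
    filter_upwards [hg.continuousAt.eventually (lt_mem_nhds hgy)] with y' hy'
    exact deriv_sqrt_mul_const hf hfx hy'.le
  rw [hpartial.deriv_eq]
  exact ((hg.sqrt hgy.ne').const_mul _).deriv

end SqrtMul

theorem hasDerivAt_sub_div (a d x : ℝ) : HasDerivAt (fun t => (t - a) / d) (1 / d) x :=
  ((hasDerivAt_id x).sub_const a).div_const d

theorem eulerPoissonDarboux_sqrt_mul_eq_zero {a d d' x y : ℝ}
    (hx : 0 < (x - a) / d) (hy : 0 < (y - a) / d') (hxy : x ≠ y) :
    eulerPoissonDarboux (fun x y => √((x - a) / d * ((y - a) / d'))) x y = 0 := by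
  have hf := hasDerivAt_sub_div a d x
  have hg := hasDerivAt_sub_div a d' y
  unfold eulerPoissonDarboux
  rw [deriv_deriv_sqrt_mul hf hx hg hy, deriv_sqrt_mul_const hf hx hy.le,
    deriv_sqrt_const_mul hg hy hx.le]
  have hd : d ≠ 0 := by rintro rfl; simp at hx
  have hd' : d' ≠ 0 := by rintro rfl; simp at hy
  have hsx : √((x - a) / d) ≠ 0 := (Real.sqrt_pos.2 hx).ne'
  have hsy : √((y - a) / d') ≠ 0 := (Real.sqrt_pos.2 hy).ne'
  have hxy' : x - y ≠ 0 := sub_ne_zero.2 hxy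
  field_simp
  rw [Real.sq_sqrt hx.le, Real.sq_sqrt hy.le]
  field_simp
  ring

theorem stmt_14_general (l1 l2 l3 : ℝ)
    (u v w : ℝ → ℝ → ℝ)
    (hu : ∀ X Y, u X Y = Real.sqrt ((X - l1) * (Y - l1) / ((l2 - l1) * (l3 - l1))))
    (hv : ∀ X Y, v X Y = Real.sqrt ((X - l2) * (l2 - Y) / ((l2 - l1) * (l3 - l2))))
    (hw : ∀ X Y, w X Y = Real.sqrt ((l3 - X) * (l3 - Y) / ((l3 - l1) * (l3 - l2))))
    (X Y : ℝ) (hY1 : l1 < Y) (hY2 : Y < l2) (hX1 : l2 < X) (hX2 : X < l3) :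
    (deriv (fun Y' => deriv (fun X' => u X' Y') X) Y
      + ((1 : ℝ)/2) / (X - Y) * deriv (fun X' => u X' Y) X
      - ((1 : ℝ)/2) / (X - Y) * deriv (fun Y' => u X Y') Y = 0) ∧
    (deriv (fun Y' => deriv (fun X' => v X' Y') X) Y
      + ((1 : ℝ)/2) / (X - Y) * deriv (fun X' => v X' Y) X
      - ((1 : ℝ)/2) / (X - Y) * deriv (fun Y' => v X Y') Y = 0) ∧
    (deriv (fun Y' => deriv (fun X' => w X' Y') X) Y
      + ((1 : ℝ)/2) / (X - Y) * deriv (fun X' => w X' Y) X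
      - ((1 : ℝ)/2) / (X - Y) * deriv (fun Y' => w X Y') Y = 0) := by
  have hXY : X ≠ Y := by linarith
  refine ⟨?_, ?_, ?_⟩
  · obtain rfl : u = fun X Y => √((X - l1) / (l2 - l1) * ((Y - l1) / (l3 - l1))) := by
      ext X Y; rw [hu, mul_div_mul_comm]
    exact eulerPoissonDarboux_sqrt_mul_eq_zero (div_pos (by linarith) (by linarith))
      (div_pos (by linarith) (by linarith)) hXY
  · obtain rfl : v = fun X Y => √((X - l2) / (l3 - l2) * ((Y - l2) / (l1 - l2))) := by
      ext X Y; rw [hv, div_mul_div_comm, ← neg_div_neg_eq]; congr 2 <;> ring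
    exact eulerPoissonDarboux_sqrt_mul_eq_zero (div_pos (by linarith) (by linarith))
      (div_pos_of_neg_of_neg (by linarith) (by linarith)) hXY
  · obtain rfl : w = fun X Y => √((X - l3) / (l1 - l3) * ((Y - l3) / (l2 - l3))) := by
      ext X Y; rw [hw, div_mul_div_comm]; congr 2 <;> ring
    exact eulerPoissonDarboux_sqrt_mul_eq_zero (div_pos_of_neg_of_neg (by linarith) (by linarith))
      (div_pos_of_neg_of_neg (by linarith) (by linarith)) hXY

/-- Each component of the classical map `e₃` on the rectangle `λ₁ < Y < λ₂ < X < λ₃`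
satisfies the Euler equation `e_{XY} + (1/2)/(X-Y)·e_X - (1/2)/(X-Y)·e_Y = 0`. -/
theorem stmt_14 (l1 l2 l3 : ℝ) (h12 : l1 < l2) (h23 : l2 < l3)
    (u v w : ℝ → ℝ → ℝ)
    (hu : ∀ X Y, u X Y = Real.sqrt ((X - l1) * (Y - l1) / ((l2 - l1) * (l3 - l1))))
    (hv : ∀ X Y, v X Y = Real.sqrt ((X - l2) * (l2 - Y) / ((l2 - l1) * (l3 - l2))))
    (hw : ∀ X Y, w X Y = Real.sqrt ((l3 - X) * (l3 - Y) / ((l3 - l1) * (l3 - l2))))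
    (X Y : ℝ) (hY1 : l1 < Y) (hY2 : Y < l2) (hX1 : l2 < X) (hX2 : X < l3) :
    (deriv (fun Y' => deriv (fun X' => u X' Y') X) Y
      + ((1 : ℝ)/2) / (X - Y) * deriv (fun X' => u X' Y) X
      - ((1 : ℝ)/2) / (X - Y) * deriv (fun Y' => u X Y') Y = 0) ∧
    (deriv (fun Y' => deriv (fun X' => v X' Y') X) Y
      + ((1 : ℝ)/2) / (X - Y) * deriv (fun X' => v X' Y) X
      - ((1 : ℝ)/2) / (X - Y) * deriv (fun Y' => v X Y') Y = 0) ∧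
    (deriv (fun Y' => deriv (fun X' => w X' Y') X) Y
      + ((1 : ℝ)/2) / (X - Y) * deriv (fun X' => w X' Y) X
      - ((1 : ℝ)/2) / (X - Y) * deriv (fun Y' => w X Y') Y = 0) :=
  stmt_14_general l1 l2 l3 u v w hu hv hw X Y hY1 hY2 hX1 hX2
end

section
/- If Φ satisfies Φ_{XY} - (1/2)(X-Y)^{-1}Φ_X + (1/2)(X-Y)^{-1}Φ_Y = 0 and a vector-valued function e satisfies the dual Euler equation e_{XY} + (1/2)(X-Y)^{-1}e_X - (1/2)(X-Y)^{-1}e_Y = 0 on an open subset of {X > Y}, then ∂/∂Y(Φ_X·e_X) = ∂/∂X(Φ_Y·e_Y); hence the ℝ³-valued 1-form -Φ_X·e_X dX - Φ_Y·e_Y dY is closed. -/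
/-! Expanding both sides by the product rule and using the symmetry of the mixed partials, the two
Euler equations give `Φ_XY = c (Φ_X - Φ_Y)` and `e_XY = c (e_Y - e_X)` with `c = ½ (X - Y)⁻¹`;
both sides then reduce to `c (Φ_X e_Y - Φ_Y e_X)`. -/

open Function

section PartialDerivatives

variable {E : Type*} [NormedAddCommGroup E] [NormedSpace ℝ E] {x y : ℝ}

lemma DifferentiableAt.hasDerivAt_fst_slice {G : ℝ × ℝ → E} (hG : DifferentiableAt ℝ G (x, y)) :
    HasDerivAt (fun x' => G (x', y)) (fderiv ℝ G (x, y) (1, 0)) x := by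
  simpa [comp_def] using
    hG.hasFDerivAt.comp_hasDerivAt x ((hasDerivAt_id x).prodMk (hasDerivAt_const x y))

lemma DifferentiableAt.hasDerivAt_snd_slice {G : ℝ × ℝ → E} (hG : DifferentiableAt ℝ G (x, y)) :
    HasDerivAt (fun y' => G (x, y')) (fderiv ℝ G (x, y) (0, 1)) y := by
  simpa [comp_def] using
    hG.hasFDerivAt.comp_hasDerivAt y ((hasDerivAt_const y x).prodMk (hasDerivAt_id y))

variable {f : ℝ → ℝ → E}

lemma hasDerivAt_deriv_fst_of_contDiffAt (hf : ContDiffAt ℝ 2 (uncurry f) (x, y)) :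
    HasDerivAt (fun y' => deriv (fun x' => f x' y') x)
      (fderiv ℝ (fderiv ℝ (uncurry f)) (x, y) (0, 1) (1, 0)) y := by
  have hD : DifferentiableAt ℝ (fderiv ℝ (uncurry f)) (x, y) :=
    (hf.fderiv_right (m := 1) (by norm_num)).differentiableAt one_ne_zero
  have hslice : HasDerivAt (fun y' => fderiv ℝ (uncurry f) (x, y') (1, 0))
      (fderiv ℝ (fderiv ℝ (uncurry f)) (x, y) (0, 1) (1, 0)) y :=
    (ContinuousLinearMap.apply ℝ E ((1, 0) : ℝ × ℝ)).hasFDerivAt.comp_hasDerivAt y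
      hD.hasDerivAt_snd_slice
  refine hslice.congr_of_eventuallyEq ?_
  have hnear : ∀ᶠ y' in nhds y, ContDiffAt ℝ 2 (uncurry f) (x, y') :=
    (continuous_const.prodMk continuous_id).continuousAt.eventually (hf.eventually (by simp))
  filter_upwards [hnear] with y' hy'
  exact ((hy'.differentiableAt two_ne_zero).hasDerivAt_fst_slice).deriv

lemma hasDerivAt_deriv_snd_of_contDiffAt (hf : ContDiffAt ℝ 2 (uncurry f) (x, y)) :
    HasDerivAt (fun x' => deriv (fun y' => f x' y') y)
      (fderiv ℝ (fderiv ℝ (uncurry f)) (x, y) (0, 1) (1, 0)) x := by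
  have hD : DifferentiableAt ℝ (fderiv ℝ (uncurry f)) (x, y) :=
    (hf.fderiv_right (m := 1) (by norm_num)).differentiableAt one_ne_zero
  have hslice : HasDerivAt (fun x' => fderiv ℝ (uncurry f) (x', y) (0, 1))
      (fderiv ℝ (fderiv ℝ (uncurry f)) (x, y) (1, 0) (0, 1)) x :=
    (ContinuousLinearMap.apply ℝ E ((0, 1) : ℝ × ℝ)).hasFDerivAt.comp_hasDerivAt x
      hD.hasDerivAt_fst_slice
  rw [(hf.isSymmSndFDerivAt (by simp)).eq] at hslice
  refine hslice.congr_of_eventuallyEq ?_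
  have hnear : ∀ᶠ x' in nhds x, ContDiffAt ℝ 2 (uncurry f) (x', y) :=
    (continuous_id.prodMk continuous_const).continuousAt.eventually (hf.eventually (by simp))
  filter_upwards [hnear] with x' hx'
  exact ((hx'.differentiableAt two_ne_zero).hasDerivAt_snd_slice).deriv

end PartialDerivatives

lemma smul_add_smul_eq_of_euler_pair {E : Type*} [AddCommGroup E] [Module ℝ E]
    {c a b d : ℝ} {u v w : E} (hd : d - c * a + c * b = 0) (hw : w + c • u - c • v = 0) :
    a • w + d • u = b • w + d • v := by
  obtain rfl : d = c * a - c * b := by linarith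
  obtain rfl : w = c • v - c • u := by rw [← sub_eq_zero, ← hw]; abel
  module

theorem stmt_15_general (U : Set (ℝ × ℝ)) (hUopen : IsOpen U)
    (Φ : ℝ → ℝ → ℝ) (e : ℝ → ℝ → (Fin 3 → ℝ))
    (hΦC2 : ContDiffOn ℝ 2 (fun p : ℝ × ℝ => Φ p.1 p.2) U)
    (heC2 : ContDiffOn ℝ 2 (fun p : ℝ × ℝ => e p.1 p.2) U)
    (hEulerΦ : ∀ X Y : ℝ, (X, Y) ∈ U →
      deriv (fun Y' => deriv (fun X' => Φ X' Y') X) Y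
        - ((1 : ℝ)/2) * (X - Y)⁻¹ * deriv (fun X' => Φ X' Y) X
        + ((1 : ℝ)/2) * (X - Y)⁻¹ * deriv (fun Y' => Φ X Y') Y = 0)
    (hEulere : ∀ X Y : ℝ, (X, Y) ∈ U →
      deriv (fun Y' => deriv (fun X' => e X' Y') X) Y
        + (((1 : ℝ)/2) * (X - Y)⁻¹) • deriv (fun X' => e X' Y) X
        - (((1 : ℝ)/2) * (X - Y)⁻¹) • deriv (fun Y' => e X Y') Y = 0) :
    ∀ X Y : ℝ, (X, Y) ∈ U →
      deriv (fun Y' => (deriv (fun X' => Φ X' Y') X) • (deriv (fun X' => e X' Y') X)) Y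
        = deriv (fun X' => (deriv (fun Y' => Φ X' Y') Y) • (deriv (fun Y' => e X' Y') Y)) X := by
  intro X Y h
  have hΦ : ContDiffAt ℝ 2 (uncurry Φ) (X, Y) := hΦC2.contDiffAt (hUopen.mem_nhds h)
  have he : ContDiffAt ℝ 2 (uncurry e) (X, Y) := heC2.contDiffAt (hUopen.mem_nhds h)
  have hEΦ := hEulerΦ X Y h
  have hEe := hEulere X Y h
  rw [(hasDerivAt_deriv_fst_of_contDiffAt hΦ).deriv] at hEΦ
  rw [(hasDerivAt_deriv_fst_of_contDiffAt he).deriv] at hEe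
  calc _ = _ := ((hasDerivAt_deriv_fst_of_contDiffAt hΦ).smul
          (hasDerivAt_deriv_fst_of_contDiffAt he)).deriv
    _ = _ := smul_add_smul_eq_of_euler_pair hEΦ hEe
    _ = _ := ((hasDerivAt_deriv_snd_of_contDiffAt hΦ).smul
          (hasDerivAt_deriv_snd_of_contDiffAt he)).deriv.symm

/-- If `Φ` satisfies the Euler equation `Φ_{XY} - (1/2)(X-Y)⁻¹Φ_X + (1/2)(X-Y)⁻¹Φ_Y = 0`
and the vector-valued `e` satisfies the dual Euler equation
`e_{XY} + (1/2)(X-Y)⁻¹e_X - (1/2)(X-Y)⁻¹e_Y = 0` on an open subset of `{X > Y}`,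
then `∂/∂Y(Φ_X·e_X) = ∂/∂X(Φ_Y·e_Y)`. -/
theorem stmt_15 (U : Set (ℝ × ℝ)) (hUopen : IsOpen U)
    (hUsub : U ⊆ {p : ℝ × ℝ | p.2 < p.1})
    (Φ : ℝ → ℝ → ℝ) (e : ℝ → ℝ → (Fin 3 → ℝ))
    (hΦC2 : ContDiffOn ℝ 2 (fun p : ℝ × ℝ => Φ p.1 p.2) U)
    (heC2 : ContDiffOn ℝ 2 (fun p : ℝ × ℝ => e p.1 p.2) U)
    (hEulerΦ : ∀ X Y : ℝ, (X, Y) ∈ U →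
      deriv (fun Y' => deriv (fun X' => Φ X' Y') X) Y
        - ((1 : ℝ)/2) * (X - Y)⁻¹ * deriv (fun X' => Φ X' Y) X
        + ((1 : ℝ)/2) * (X - Y)⁻¹ * deriv (fun Y' => Φ X Y') Y = 0)
    (hEulere : ∀ X Y : ℝ, (X, Y) ∈ U →
      deriv (fun Y' => deriv (fun X' => e X' Y') X) Y
        + (((1 : ℝ)/2) * (X - Y)⁻¹) • deriv (fun X' => e X' Y) X
        - (((1 : ℝ)/2) * (X - Y)⁻¹) • deriv (fun Y' => e X Y') Y = 0) :
    ∀ X Y : ℝ, (X, Y) ∈ U →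
      deriv (fun Y' => (deriv (fun X' => Φ X' Y') X) • (deriv (fun X' => e X' Y') X)) Y
        = deriv (fun X' => (deriv (fun Y' => Φ X' Y') Y) • (deriv (fun Y' => e X' Y') Y)) X :=
  stmt_15_general U hUopen Φ e hΦC2 heC2 hEulerΦ hEulere
end

section
/- The functions a = (X³+3c₂X²+3c₁X+c₀)/(Y-X)³, b = (Y³+3c₂Y²+3c₁Y+c₀)/(X-Y)³, p = (Y³-3Y²X-3YX²+X³-12c₂XY-6c₁(X+Y)-4c₀)/(Y-X)³ satisfy the linear system da = (2a-p+1)θ₁ + 6a·θ₂, db = 6b·θ₁ + (2b+p+1)θ₂, dp = 4(2b+p+1)θ₁ - 4(2a-p+1)θ₂, where θ₁ = dX/(2(Y-X)) and θ₂ = dY/(2(X-Y)), on any open subset of {X > Y}. -/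
/-!
Each of `a`, `b`, `p` is a polynomial in the differentiated variable divided by `±(X - Y)³`, so
every partial derivative is given by the quotient rule for `f t / (t - k) ^ n`; once the powers
of `X - Y` are cleared, the six equations become polynomial identities.
-/

section

variable {𝕜 : Type*} [NontriviallyNormedField 𝕜] {f : 𝕜 → 𝕜} {k x : 𝕜}

theorem deriv_div_sub_pow (hf : DifferentiableAt 𝕜 f x) (hx : x ≠ k) (n : ℕ) :
    deriv (fun t => f t / (t - k) ^ n) x
      = (deriv f x * (x - k) - n * f x) / (x - k) ^ (n + 1) := by
  have hk : x - k ≠ 0 := sub_ne_zero.mpr hx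
  rw [deriv_fun_div hf (by fun_prop) (pow_ne_zero n hk :)]
  simp (disch := fun_prop) only [deriv_fun_pow, deriv_sub_const, deriv_id'']
  cases n with
  | zero => simp [hk]
  | succ m =>
    rw [Nat.add_sub_cancel]
    field_simp
    ring

theorem deriv_div_const_sub_pow (hf : DifferentiableAt 𝕜 f x) (hx : x ≠ k) (n : ℕ) :
    deriv (fun t => f t / (k - t) ^ n) x
      = (deriv f x * (k - x) + n * f x) / (k - x) ^ (n + 1) := by
  have hk : k - x ≠ 0 := sub_ne_zero.mpr hx.symm
  rw [deriv_fun_div hf (by fun_prop) (pow_ne_zero n hk :)]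
  simp (disch := fun_prop) only [deriv_fun_pow, deriv_const_sub_id]
  cases n with
  | zero => simp [hk]
  | succ m =>
    rw [Nat.add_sub_cancel]
    field_simp
    ring

end

/-- The explicit functions `a, b, p` satisfy the linear Frobenius system
`da = (2a-p+1)θ₁ + 6a·θ₂`, `db = 6b·θ₁ + (2b+p+1)θ₂`,
`dp = 4(2b+p+1)θ₁ - 4(2a-p+1)θ₂` with `θ₁ = dX/(2(Y-X))`, `θ₂ = dY/(2(X-Y))`,
expressed as six scalar PDE on `{X > Y}`. -/
theorem stmt_17 (c0 c1 c2 : ℝ) (a b p : ℝ → ℝ → ℝ)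
    (ha : ∀ X Y, a X Y = (X ^ 3 + 3 * c2 * X ^ 2 + 3 * c1 * X + c0) / (Y - X) ^ 3)
    (hb : ∀ X Y, b X Y = (Y ^ 3 + 3 * c2 * Y ^ 2 + 3 * c1 * Y + c0) / (X - Y) ^ 3)
    (hp : ∀ X Y, p X Y = (Y ^ 3 - 3 * Y ^ 2 * X - 3 * Y * X ^ 2 + X ^ 3
        - 12 * c2 * X * Y - 6 * c1 * (X + Y) - 4 * c0) / (Y - X) ^ 3)
    (X Y : ℝ) (hXY : Y < X) :
    deriv (fun X' => a X' Y) X = (2 * a X Y - p X Y + 1) / (2 * (Y - X)) ∧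
    deriv (fun Y' => a X Y') Y = 6 * a X Y / (2 * (X - Y)) ∧
    deriv (fun X' => b X' Y) X = 6 * b X Y / (2 * (Y - X)) ∧
    deriv (fun Y' => b X Y') Y = (2 * b X Y + p X Y + 1) / (2 * (X - Y)) ∧
    deriv (fun X' => p X' Y) X = 4 * (2 * b X Y + p X Y + 1) / (2 * (Y - X)) ∧
    deriv (fun Y' => p X Y') Y = -(4 * (2 * a X Y - p X Y + 1)) / (2 * (X - Y)) := by
  have hXY' : X ≠ Y := hXY.ne'
  have hYX : Y ≠ X := hXY.ne
  simp (disch := first | fun_prop | assumption) only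
    [ha, hb, hp, deriv_div_sub_pow, deriv_div_const_sub_pow]
  simp (disch := fun_prop) only [deriv_fun_add, deriv_fun_sub, deriv_fun_mul, deriv_fun_pow,
    deriv_const_mul_id', deriv_const_add_id', deriv_id'', deriv_const]
  refine ⟨?_, ?_, ?_, ?_, ?_, ?_⟩ <;> field_simp <;> ring
end
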